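/- arXiv:1510.08406 — 3 statements merged into one kernel-verified Lean document; each statement's English description precedes it below -/
import Mathlib

section
/- Let x₁, x₂ ∈ ℝ^d and let w ∼ N(0, σ² I) on ℝ^d and t ∼ Uniform([0, 2π]) be independent. Then E[2 cos(wᵀx₁ + t) cos(wᵀx₂ + t)] = exp(−σ² ‖x₁ − x₂‖² / 2), i.e., the expectation of the product of random Fourier features equals the Gaussian kernel. -/
open MeasureTheory ProbabilityTheory Real

open scoped ENNReal NNReal


lemma cos_int_zero (θ : ℝ) : ∫ t in (0:ℝ)..(2*π), Real.cos (θ + 2*t) = 0 := by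
  have h : ∀ t : ℝ, θ + 2*t = 2*t + θ := fun t => by ring
  simp_rw [h]
  rw [intervalIntegral.integral_comp_mul_add Real.cos (two_ne_zero) θ]
  rw [integral_cos]
  have h4 : 2*(2*π)+θ = (θ + 2*π) + 2*π := by ring
  rw [mul_zero, zero_add, h4, Real.sin_add_two_pi, Real.sin_add_two_pi]
  simp

lemma inner_unif (a b : ℝ) :
    (∫ t : ℝ, 2 * Real.cos (a + t) * Real.cos (b + t)
      ∂((ENNReal.ofReal (2 * π))⁻¹ • volume.restrict (Set.Icc 0 (2 * π))))
    = Real.cos (a - b) := by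
  have h2π : (0:ℝ) < 2 * π := Real.two_pi_pos
  rw [integral_smul_measure]
  have htR : ((ENNReal.ofReal (2 * π))⁻¹).toReal = (2*π)⁻¹ := by
    rw [ENNReal.toReal_inv, ENNReal.toReal_ofReal h2π.le]
  rw [htR]
  have hIcc : (∫ t in Set.Icc (0:ℝ) (2*π), 2 * Real.cos (a + t) * Real.cos (b + t))
      = ∫ t in (0:ℝ)..(2*π), 2 * Real.cos (a + t) * Real.cos (b + t) := by
    rw [intervalIntegral.integral_of_le h2π.le, integral_Icc_eq_integral_Ioc]
  rw [hIcc]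
  have hident : ∀ t : ℝ, 2 * Real.cos (a + t) * Real.cos (b + t)
      = Real.cos (a - b) + Real.cos ((a + b) + 2*t) := by
    intro t
    rw [Real.cos_add_cos]
    have e1 : ((a-b)+((a+b)+2*t))/2 = a+t := by ring
    have e2 : ((a-b)-((a+b)+2*t))/2 = -(b+t) := by ring
    rw [e1, e2, Real.cos_neg]
  simp_rw [hident]
  rw [intervalIntegral.integral_add (intervalIntegrable_const)
    ((Continuous.intervalIntegrable (by continuity) _ _)),
    cos_int_zero, intervalIntegral.integral_const]
  simp only [add_zero, smul_eq_mul]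
  field_simp
  ring

lemma my_integral_complex_ofReal {α : Type*} [MeasurableSpace α] {μ : Measure α} {f : α → ℝ} :
    ∫ x, ((f x : ℝ) : ℂ) ∂μ = ((∫ x, f x ∂μ : ℝ) : ℂ) := integral_ofReal

lemma gauss_cexp (v : NNReal) (hv : v ≠ 0) (c : ℝ) :
    ∫ x : ℝ, Complex.exp (Complex.I * c * x) ∂(gaussianReal 0 v)
      = (Real.exp (-(v:ℝ) * c ^ 2 / 2) : ℂ) := by
  have hv' : (0:ℝ) < v := lt_of_le_of_ne (v.coe_nonneg) (by exact_mod_cast (Ne.symm hv))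
  have h2v : (0:ℝ) < 2 * π * v := by positivity
  rw [gaussianReal_of_var_ne_zero 0 hv]
  have hd : (gaussianPDF 0 v) = fun x => ((gaussianPDFReal 0 v x).toNNReal : ℝ≥0∞) := by
    funext x; rfl
  rw [hd, integral_withDensity_eq_integral_smul
    ((measurable_gaussianPDFReal 0 v).real_toNNReal) _]
  have hsmul : ∀ x : ℝ, (gaussianPDFReal 0 v x).toNNReal • Complex.exp (Complex.I * c * x)
      = ((√(2 * π * v))⁻¹ : ℂ) * (Complex.exp (Complex.I * c * x)
          * Complex.exp (-(1/(2*(v:ℝ)) : ℂ) * (x:ℂ) ^ 2)) := by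
    intro x
    rw [NNReal.smul_def, Real.coe_toNNReal _ (gaussianPDFReal_nonneg 0 v x), gaussianPDFReal,
      Complex.real_smul, Complex.ofReal_mul, Complex.ofReal_exp, Complex.ofReal_inv]
    have harg : ((-(x - 0) ^ 2 / (2 * (v:ℝ)) : ℝ) : ℂ) = -(1/(2*(v:ℝ)) : ℂ) * (x:ℂ)^2 := by
      have : ((2 * (v:ℝ) : ℝ) : ℂ) ≠ 0 := by
        exact_mod_cast (by positivity : (2*(v:ℝ):ℝ) ≠ 0)
      push_cast
      field_simp
      ring
    rw [harg]
    ring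
  simp_rw [hsmul]
  rw [integral_const_mul]
  have hb : (0:ℝ) < (1/(2*(v:ℝ)) : ℂ).re := by
    simp only [one_div, Complex.inv_re]
    norm_num
    positivity
  rw [fourierIntegral_gaussian hb (c : ℂ)]
  have hπb : (↑π / (1/(2*(v:ℝ)) : ℂ)) = ((2 * π * (v:ℝ) : ℝ) : ℂ) := by
    push_cast
    field_simp
  rw [hπb]
  have hcpow : ((2 * π * (v:ℝ) : ℝ) : ℂ) ^ (1/2 : ℂ) = ((√(2 * π * v) : ℝ) : ℂ) := by
    rw [show (1/2 : ℂ) = ((1/2 : ℝ) : ℂ) by norm_num, ← Complex.ofReal_cpow h2v.le,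
      Real.sqrt_eq_rpow]
  rw [hcpow]
  have hexp : (-(c:ℂ) ^ 2 / (4 * (1/(2*(v:ℝ)) : ℂ))) = ((-(v:ℝ) * c ^ 2 / 2 : ℝ) : ℂ) := by
    have : (2*(v:ℝ) : ℂ) ≠ 0 := by
      exact_mod_cast (by positivity : (2*(v:ℝ):ℝ) ≠ 0)
    push_cast
    field_simp
    ring
  rw [hexp, ← mul_assoc, ← Complex.ofReal_inv, ← Complex.ofReal_mul,
    inv_mul_cancel₀ (by positivity : √(2 * π * v) ≠ 0)]
  rw [Complex.ofReal_exp]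
  simp

lemma gauss_cos (v : NNReal) (hv : v ≠ 0) (c : ℝ) :
    ∫ x : ℝ, Real.cos (c * x) ∂(gaussianReal 0 v) = Real.exp (-(v:ℝ) * c ^ 2 / 2) := by
  have key := gauss_cexp v hv c
  have hexp : ∀ x : ℝ, Complex.exp (Complex.I * c * x)
      = ((Real.cos (c * x) : ℝ) : ℂ) + ((Real.sin (c * x) : ℝ) : ℂ) * Complex.I := by
    intro x
    rw [mul_assoc, mul_comm, ← Complex.ofReal_mul]
    rw [Complex.exp_mul_I]
    push_cast
    ring
  simp_rw [hexp] at key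
  have hcos : Integrable (fun x : ℝ => Real.cos (c * x)) (gaussianReal 0 v) := by
    apply Integrable.mono' (integrable_const 1)
    · exact (Real.continuous_cos.comp (continuous_const.mul continuous_id)).aestronglyMeasurable
    · exact Filter.Eventually.of_forall fun x => by
        simpa using Real.abs_cos_le_one (c * x)
  have hsin : Integrable (fun x : ℝ => Real.sin (c * x)) (gaussianReal 0 v) := by
    apply Integrable.mono' (integrable_const 1)
    · exact (Real.continuous_sin.comp (continuous_const.mul continuous_id)).aestronglyMeasurable
    · exact Filter.Eventually.of_forall fun x => by
        simpa using Real.abs_sin_le_one (c * x)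
  have h1 : Integrable (fun x : ℝ => ((Real.cos (c*x) : ℝ) : ℂ)) (gaussianReal 0 v) := hcos.ofReal
  have h2 : Integrable (fun x : ℝ => ((Real.sin (c*x) : ℝ) : ℂ) * Complex.I) (gaussianReal 0 v) :=
    hsin.ofReal.mul_const Complex.I
  rw [integral_add h1 h2] at key
  rw [integral_mul_const, my_integral_complex_ofReal, my_integral_complex_ofReal] at key
  have h3 := congrArg Complex.re key
  simp only [Complex.add_re, Complex.ofReal_re, Complex.mul_re, Complex.I_re, Complex.I_im,
    Complex.ofReal_im, mul_zero, zero_mul, sub_zero, add_zero, mul_one] at h3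
  exact h3

lemma my_integral_pi_prod {n : ℕ} (μ : Measure ℝ) [SigmaFinite μ] (f : Fin n → ℝ → ℂ) :
    ∫ x : Fin n → ℝ, ∏ i, f i (x i) ∂(Measure.pi fun _ => μ) = ∏ i, ∫ x, f i x ∂μ := by
  induction n with
  | zero => simp [Measure.real, Measure.pi_univ]
  | succ n ih =>
    calc
      _ = ∫ x : ℝ × (Fin n → ℝ), f 0 x.1 * ∏ i : Fin n, f (Fin.succ i) (x.2 i)
          ∂(μ.prod (Measure.pi fun _ => μ)) := by
        rw [← ((measurePreserving_piFinSuccAbove (fun _ : Fin (n+1) => μ) 0).symm).integral_comp']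
        congr 1
        funext x
        simp only [MeasurableEquiv.piFinSuccAbove_symm_apply, Fin.insertNthEquiv,
          Fin.prod_univ_succ, Fin.insertNth_zero, Equiv.coe_fn_mk, Fin.cons_succ,
          Fin.zero_succAbove, Fin.cons_zero, cast_eq]
      _ = (∫ x, f 0 x ∂μ) * ∏ i : Fin n, ∫ x, f (Fin.succ i) x ∂μ := by
        rw [← ih fun i => f (Fin.succ i), ← integral_prod_mul]
      _ = ∏ i, ∫ x, f i x ∂μ := by rw [Fin.prod_univ_succ]

lemma gauss_pi_cos (d : ℕ) (v : NNReal) (hv : v ≠ 0) (c : Fin d → ℝ) :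
    ∫ w : Fin d → ℝ, Real.cos (∑ i, w i * c i) ∂(Measure.pi fun _ : Fin d => gaussianReal 0 v)
      = Real.exp (-(v:ℝ) * (∑ i, c i ^ 2) / 2) := by
  have hSc : Continuous (fun w : Fin d → ℝ => ∑ i, w i * c i) :=
    continuous_finset_sum _ fun i _ => (continuous_apply i).mul continuous_const
  have key : ∫ w : Fin d → ℝ, Complex.exp (Complex.I * ((∑ i, w i * c i : ℝ) : ℂ))
      ∂(Measure.pi fun _ : Fin d => gaussianReal 0 v)
      = ((Real.exp (-(v:ℝ) * (∑ i, c i ^ 2) / 2) : ℝ) : ℂ) := by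
    have hprod : ∀ w : Fin d → ℝ, Complex.exp (Complex.I * ((∑ i, w i * c i : ℝ) : ℂ))
        = ∏ i, Complex.exp (Complex.I * (c i : ℂ) * (w i : ℂ)) := by
      intro w
      rw [← Complex.exp_sum]
      congr 1
      push_cast
      rw [Finset.mul_sum]
      exact Finset.sum_congr rfl fun i _ => by ring
    simp_rw [hprod]
    rw [my_integral_pi_prod (gaussianReal 0 v)
      (fun i x => Complex.exp (Complex.I * (c i : ℂ) * (x : ℂ)))]
    have hfac : ∀ i : Fin d, (∫ x : ℝ, Complex.exp (Complex.I * (c i : ℂ) * (x : ℂ))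
        ∂(gaussianReal 0 v)) = ((Real.exp (-(v:ℝ) * (c i) ^ 2 / 2) : ℝ) : ℂ) :=
      fun i => gauss_cexp v hv (c i)
    simp_rw [hfac]
    rw [← Complex.ofReal_prod, ← Real.exp_sum]
    congr 2
    rw [← Finset.sum_div, ← Finset.mul_sum]
  have hexp : ∀ w : Fin d → ℝ, Complex.exp (Complex.I * ((∑ i, w i * c i : ℝ) : ℂ))
      = ((Real.cos (∑ i, w i * c i) : ℝ) : ℂ)
        + ((Real.sin (∑ i, w i * c i) : ℝ) : ℂ) * Complex.I := by
    intro w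
    rw [mul_comm, Complex.exp_mul_I]
    push_cast
    ring
  simp_rw [hexp] at key
  have hcos : Integrable (fun w : Fin d → ℝ => Real.cos (∑ i, w i * c i))
      (Measure.pi fun _ : Fin d => gaussianReal 0 v) := by
    apply Integrable.mono' (integrable_const 1)
    · exact (Real.continuous_cos.comp hSc).aestronglyMeasurable
    · exact Filter.Eventually.of_forall fun w => by
        simpa using Real.abs_cos_le_one (∑ i, w i * c i)
  have hsin : Integrable (fun w : Fin d → ℝ => Real.sin (∑ i, w i * c i))
      (Measure.pi fun _ : Fin d => gaussianReal 0 v) := by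
    apply Integrable.mono' (integrable_const 1)
    · exact (Real.continuous_sin.comp hSc).aestronglyMeasurable
    · exact Filter.Eventually.of_forall fun w => by
        simpa using Real.abs_sin_le_one (∑ i, w i * c i)
  have h1 : Integrable (fun w : Fin d → ℝ => ((Real.cos (∑ i, w i * c i) : ℝ) : ℂ))
      (Measure.pi fun _ : Fin d => gaussianReal 0 v) := hcos.ofReal
  have h2 : Integrable (fun w : Fin d → ℝ => ((Real.sin (∑ i, w i * c i) : ℝ) : ℂ) * Complex.I)
      (Measure.pi fun _ : Fin d => gaussianReal 0 v) := hsin.ofReal.mul_const Complex.I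
  rw [integral_add h1 h2, integral_mul_const, my_integral_complex_ofReal,
    my_integral_complex_ofReal] at key
  have h3 := congrArg Complex.re key
  simp only [Complex.add_re, Complex.ofReal_re, Complex.mul_re, Complex.I_re, Complex.I_im,
    Complex.ofReal_im, mul_zero, zero_mul, sub_zero, add_zero, mul_one] at h3
  exact h3

/-- The expectation of the product of random Fourier features
`f(x,(w,t)) = √2 cos(wᵀx + t)`, with `w ∼ N(0, σ²I)` and `t ∼ Uniform([0,2π])`
independent, equals the Gaussian kernel `exp(−σ²‖x₁−x₂‖²/2)`. -/
theorem random_fourier_features_gaussian_kernel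
    (d : ℕ) (σ : NNReal) (hσ : 0 < σ) (x₁ x₂ : Fin d → ℝ) :
    ∫ w : Fin d → ℝ,
      (∫ t : ℝ,
        2 * Real.cos ((∑ i, w i * x₁ i) + t) * Real.cos ((∑ i, w i * x₂ i) + t)
        ∂((ENNReal.ofReal (2 * π))⁻¹ • volume.restrict (Set.Icc 0 (2 * π))))
      ∂(Measure.pi fun _ : Fin d => gaussianReal 0 (σ ^ 2))
    = Real.exp (-(σ : ℝ) ^ 2 * (∑ i, (x₁ i - x₂ i) ^ 2) / 2) := by
  simp_rw [inner_unif]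
  have harg : ∀ w : Fin d → ℝ, (∑ i, w i * x₁ i) - (∑ i, w i * x₂ i)
      = ∑ i, w i * (x₁ i - x₂ i) := by
    intro w
    rw [← Finset.sum_sub_distrib]
    exact Finset.sum_congr rfl fun i _ => by ring
  simp_rw [harg]
  rw [gauss_pi_cos d (σ ^ 2) (pow_ne_zero 2 hσ.ne') (fun i => x₁ i - x₂ i)]
  push_cast
  ring_nf
end

section
/- Let D and D̂ be n × n diagonal matrices with |D_{ii} − D̂_{ii}| ≤ nδl and min_i min(D_{ii}, D̂_{ii}) ≥ n(1−δ)l for some 0 < δ < 1, l > 0. Then ‖D^{−1/2} − D̂^{−1/2}‖₂ ≤ (δ/2) (1−δ)^{−3/2} (nl)^{−1/2}. -/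
open Matrix

/-- The operator 2-norm (largest singular value) of an `n × n` real matrix. -/
noncomputable def l2OpNorm {n : ℕ} (A : Matrix (Fin n) (Fin n) ℝ) : ℝ :=
  ‖LinearMap.toContinuousLinearMap (Matrix.toEuclideanLin A)‖

lemma l2OpNorm_diagonal_le {n : ℕ} (v : Fin n → ℝ) (C : ℝ) (hC : 0 ≤ C)
    (h : ∀ i, |v i| ≤ C) : l2OpNorm (Matrix.diagonal v) ≤ C := by
  apply ContinuousLinearMap.opNorm_le_bound _ hC
  intro x
  rw [LinearMap.coe_toContinuousLinearMap']
  have hx : (0:ℝ) ≤ C * ‖x‖ := mul_nonneg hC (norm_nonneg x)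
  rw [← Real.sqrt_sq hx, EuclideanSpace.norm_eq]
  apply Real.sqrt_le_sqrt
  have key : ∀ i, ‖(Matrix.toEuclideanLin (Matrix.diagonal v) x) i‖ ^ 2
      ≤ C ^ 2 * ‖x i‖ ^ 2 := by
    intro i
    rw [Matrix.toEuclideanLin_apply]
    show ‖(Matrix.diagonal v).mulVec (WithLp.equiv 2 _ x) i‖ ^ 2 ≤ _
    rw [Matrix.mulVec_diagonal, norm_mul, mul_pow]
    have hxi : ‖(WithLp.equiv 2 (Fin n → ℝ)) x i‖ = ‖x i‖ := rfl
    rw [hxi]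
    exact mul_le_mul_of_nonneg_right
      (by rw [Real.norm_eq_abs]; exact pow_le_pow_left₀ (abs_nonneg _) (h i) 2)
      (sq_nonneg _)
  calc ∑ i, ‖(Matrix.toEuclideanLin (Matrix.diagonal v) x) i‖ ^ 2
      ≤ ∑ i, C ^ 2 * ‖x i‖ ^ 2 := Finset.sum_le_sum fun i _ => key i
    _ = (C * ‖x‖) ^ 2 := by
        rw [← Finset.mul_sum, mul_pow, EuclideanSpace.norm_eq,
          Real.sq_sqrt (Finset.sum_nonneg fun i _ => sq_nonneg _)]

lemma inv_sqrt_sub_le {x y : ℝ} (hx : 0 < x) (hxy : x ≤ y) :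
    x ^ (-(1:ℝ)/2) - y ^ (-(1:ℝ)/2) ≤ (y - x) / (2 * x ^ ((3:ℝ)/2)) := by
  have hy : 0 < y := lt_of_lt_of_le hx hxy
  have hxr : x ^ (-(1:ℝ)/2) = (Real.sqrt x)⁻¹ := by
    rw [show -(1:ℝ)/2 = -(1/2) by ring, Real.rpow_neg hx.le, Real.sqrt_eq_rpow]
  have hyr : y ^ (-(1:ℝ)/2) = (Real.sqrt y)⁻¹ := by
    rw [show -(1:ℝ)/2 = -(1/2) by ring, Real.rpow_neg hy.le, Real.sqrt_eq_rpow]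
  have hx32 : x ^ ((3:ℝ)/2) = x * Real.sqrt x := by
    rw [show (3:ℝ)/2 = 1 + 1/2 by ring, Real.rpow_add hx, Real.rpow_one,
      Real.sqrt_eq_rpow]
  rw [hxr, hyr, hx32]
  have hsx : 0 < Real.sqrt x := Real.sqrt_pos.mpr hx
  have hsy : 0 < Real.sqrt y := Real.sqrt_pos.mpr hy
  have hsxy : Real.sqrt x ≤ Real.sqrt y := Real.sqrt_le_sqrt hxy
  have hxx : Real.sqrt x * Real.sqrt x = x := Real.mul_self_sqrt hx.le
  have hyy : Real.sqrt y * Real.sqrt y = y := Real.mul_self_sqrt hy.le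
  have expand : (Real.sqrt x)⁻¹ - (Real.sqrt y)⁻¹
      = (Real.sqrt y - Real.sqrt x) / (Real.sqrt x * Real.sqrt y) := by
    field_simp
  rw [expand, div_le_div_iff₀ (by positivity) (by positivity)]
  nlinarith [mul_pos hsx hsy, sq_nonneg (Real.sqrt y - Real.sqrt x),
    mul_nonneg (sub_nonneg.mpr hsxy) (mul_pos hsx (mul_pos hsx hsx)).le]

lemma abs_inv_sqrt_sub_le {x y : ℝ} (hx : 0 < x) (hy : 0 < y) :
    |x ^ (-(1:ℝ)/2) - y ^ (-(1:ℝ)/2)| ≤ |x - y| / (2 * (min x y) ^ ((3:ℝ)/2)) := by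
  rcases le_total x y with h | h
  · rw [min_eq_left h, abs_of_nonneg (sub_nonneg.mpr
      (Real.rpow_le_rpow_of_nonpos hx h (by norm_num))),
      abs_of_nonpos (by linarith), neg_sub]
    exact inv_sqrt_sub_le hx h
  · rw [min_eq_right h, abs_sub_comm, abs_of_nonneg (sub_nonneg.mpr
      (Real.rpow_le_rpow_of_nonpos hy h (by norm_num))),
      abs_of_nonneg (by linarith)]
    exact inv_sqrt_sub_le hy h

/-- For diagonal matrices `D`, `D̂` with `|D_{ii} − D̂_{ii}| ≤ nδl` and
`min(D_{ii}, D̂_{ii}) ≥ n(1−δ)l`, one has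
`‖D^{−1/2} − D̂^{−1/2}‖₂ ≤ (δ/2)(1−δ)^{−3/2}(nl)^{−1/2}`. -/
theorem l2OpNorm_diagonal_inv_sqrt_sub {n : ℕ}
    (d dhat : Fin n → ℝ) (δ l : ℝ) (hδ0 : 0 < δ) (hδ1 : δ < 1) (hl : 0 < l)
    (hdiff : ∀ i, |d i - dhat i| ≤ n * δ * l)
    (hlow : ∀ i, (n : ℝ) * (1 - δ) * l ≤ min (d i) (dhat i)) :
    l2OpNorm (Matrix.diagonal (fun i => (d i) ^ (-(1 : ℝ) / 2))
        - Matrix.diagonal (fun i => (dhat i) ^ (-(1 : ℝ) / 2)))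
      ≤ (δ / 2) * (1 - δ) ^ (-(3 : ℝ) / 2) * ((n : ℝ) * l) ^ (-(1 : ℝ) / 2) := by
  have h1δ : 0 < 1 - δ := by linarith
  rw [Matrix.diagonal_sub]
  apply l2OpNorm_diagonal_le
  · positivity
  intro i
  have hn : 0 < (n : ℝ) := by exact_mod_cast i.pos
  have hnl : 0 < (n : ℝ) * l := mul_pos hn hl
  have hm : 0 < (n : ℝ) * (1 - δ) * l := by positivity
  have hd : 0 < d i := lt_of_lt_of_le hm ((hlow i).trans (min_le_left _ _))
  have hdh : 0 < dhat i := lt_of_lt_of_le hm ((hlow i).trans (min_le_right _ _))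
  calc |d i ^ (-(1:ℝ)/2) - dhat i ^ (-(1:ℝ)/2)|
      ≤ |d i - dhat i| / (2 * (min (d i) (dhat i)) ^ ((3:ℝ)/2)) :=
        abs_inv_sqrt_sub_le hd hdh
    _ ≤ ((n:ℝ) * δ * l) / (2 * ((n:ℝ) * (1 - δ) * l) ^ ((3:ℝ)/2)) := by
        exact div_le_div₀ (by positivity) (hdiff i) (by positivity)
          (mul_le_mul_of_nonneg_left
            (Real.rpow_le_rpow hm.le (hlow i) (by norm_num)) (by norm_num))
    _ = (δ / 2) * (1 - δ) ^ (-(3:ℝ)/2) * ((n:ℝ) * l) ^ (-(1:ℝ)/2) := by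
        rw [show (n:ℝ) * (1 - δ) * l = ((n:ℝ) * l) * (1 - δ) by ring,
          Real.mul_rpow hnl.le h1δ.le,
          show (-(3:ℝ)/2) = -((3:ℝ)/2) by ring,
          show (-(1:ℝ)/2) = -((1:ℝ)/2) by ring,
          Real.rpow_neg h1δ.le, Real.rpow_neg hnl.le]
        have h32 : ((n:ℝ) * l) ^ ((3:ℝ)/2) = ((n:ℝ) * l) * ((n:ℝ) * l) ^ ((1:ℝ)/2) := by
          rw [show (3:ℝ)/2 = 1 + 1/2 by ring, Real.rpow_add hnl, Real.rpow_one]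
        have hp1 : (0:ℝ) < ((n:ℝ) * l) ^ ((1:ℝ)/2) := Real.rpow_pos_of_pos hnl _
        have hp2 : (0:ℝ) < (1 - δ) ^ ((3:ℝ)/2) := Real.rpow_pos_of_pos h1δ _
        rw [h32]
        field_simp
end

section
/- Under the setting where kernel entries satisfy l ≤ W_{ij} ≤ u and |W_{ij} − Ŵ_{ij}| ≤ δl for all i, j (0 < δ < 1, 0 < l < u), with degree matrices D_{ii} = Σ_j W_{ij} and D̂_{ii} = Σ_j Ŵ_{ij}, the perturbation H₁ = (D^{−1/2} − D̂^{−1/2}) W D^{−1/2} satisfies ‖H₁‖₂ ≤ (u/(2l)) (1−δ)^{−3/2} δ. -/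
open Matrix
open scoped Matrix.Norms.L2Operator

lemma l2OpNorm_eq_norm {n : ℕ} (A : Matrix (Fin n) (Fin n) ℝ) : l2OpNorm A = ‖A‖ := rfl

lemma opNorm_diagonal_le {n : ℕ} (d : Fin n → ℝ) {c : ℝ} (hc : 0 ≤ c) (h : ∀ i, |d i| ≤ c) :
    l2OpNorm (Matrix.diagonal d) ≤ c := by
  refine ContinuousLinearMap.opNorm_le_bound _ hc fun x => ?_
  have hfx : ∀ i, (LinearMap.toContinuousLinearMap (toEuclideanLin (Matrix.diagonal d)) x) i
      = d i * x i := by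
    intro i
    simp [toEuclideanLin_apply, Matrix.mulVec_diagonal]
  rw [EuclideanSpace.norm_eq, EuclideanSpace.norm_eq]
  rw [show c * √(∑ i, ‖x i‖ ^ 2) = √(c^2 * ∑ i, ‖x i‖^2) by
    rw [Real.sqrt_mul (by positivity), Real.sqrt_sq hc]]
  apply Real.sqrt_le_sqrt
  rw [Finset.mul_sum]
  apply Finset.sum_le_sum
  intro i _
  rw [hfx i]
  simp only [Real.norm_eq_abs, abs_mul, mul_pow, ← sq_abs (x i)]
  exact mul_le_mul_of_nonneg_right (pow_le_pow_left₀ (abs_nonneg _) (h i) 2) (by positivity)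

lemma opNorm_le_of_entries {n : ℕ} (A : Matrix (Fin n) (Fin n) ℝ) {c : ℝ} (hc : 0 ≤ c)
    (h : ∀ i j, |A i j| ≤ c) : l2OpNorm A ≤ n * c := by
  refine ContinuousLinearMap.opNorm_le_bound _ (by positivity) fun x => ?_
  have hfx : ∀ i, (LinearMap.toContinuousLinearMap (toEuclideanLin A) x) i
      = ∑ j, A i j * x j := by
    intro i
    simp [toEuclideanLin_apply, Matrix.mulVec, dotProduct]
  set S := ∑ j, |x j| with hS
  have hS0 : 0 ≤ S := Finset.sum_nonneg fun j _ => abs_nonneg _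
  have hxnorm : ‖x‖ = √(∑ i, ‖x i‖^2) := EuclideanSpace.norm_eq x
  have hSx : S ≤ √n * ‖x‖ := by
    have h1 : S^2 ≤ n * ∑ j, |x j|^2 := by
      simpa using sq_sum_le_card_mul_sum_sq (s := Finset.univ) (f := fun j : Fin n => |x j|)
    have h2 : (∑ j, |x j|^2) = ∑ i, ‖x i‖^2 := by simp [Real.norm_eq_abs]
    have : S ≤ √(n * ∑ i, ‖x i‖^2) := by
      rw [← Real.sqrt_sq hS0]
      exact Real.sqrt_le_sqrt (by rw [← h2]; exact h1)
    rwa [Real.sqrt_mul (by positivity), ← hxnorm] at this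
  have hrow : ∀ i, ‖(LinearMap.toContinuousLinearMap (toEuclideanLin A) x) i‖ ≤ c * S := by
    intro i
    rw [hfx i, Real.norm_eq_abs]
    calc |∑ j, A i j * x j| ≤ ∑ j, |A i j * x j| := Finset.abs_sum_le_sum_abs _ _
      _ ≤ ∑ j, c * |x j| := by
          apply Finset.sum_le_sum; intro j _
          rw [abs_mul]; exact mul_le_mul_of_nonneg_right (h i j) (abs_nonneg _)
      _ = c * S := by rw [hS, Finset.mul_sum]
  rw [EuclideanSpace.norm_eq]
  have hsum : (∑ i, ‖(LinearMap.toContinuousLinearMap (toEuclideanLin A) x) i‖^2)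
      ≤ n * (c*S)^2 := by
    calc (∑ i, ‖(LinearMap.toContinuousLinearMap (toEuclideanLin A) x) i‖^2)
        ≤ ∑ _i : Fin n, (c*S)^2 := by
          apply Finset.sum_le_sum; intro i _
          exact pow_le_pow_left₀ (norm_nonneg _) (hrow i) 2
      _ = n * (c*S)^2 := by simp [mul_comm]
  calc √(∑ i, ‖(LinearMap.toContinuousLinearMap (toEuclideanLin A) x) i‖^2)
      ≤ √(n * (c*S)^2) := Real.sqrt_le_sqrt hsum
    _ = √n * (c*S) := by rw [Real.sqrt_mul (by positivity), Real.sqrt_sq (by positivity)]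
    _ ≤ √n * (c * (√n * ‖x‖)) := by
        apply mul_le_mul_of_nonneg_left _ (Real.sqrt_nonneg _)
        exact mul_le_mul_of_nonneg_left hSx hc
    _ = (√n * √n) * c * ‖x‖ := by ring
    _ = n * c * ‖x‖ := by rw [Real.mul_self_sqrt (by positivity)]

lemma inv_sqrt_diff_le {a b m : ℝ} (hm : 0 < m) (ha : m ≤ a) (hb : m ≤ b) :
    |(Real.sqrt a)⁻¹ - (Real.sqrt b)⁻¹| ≤ |a - b| / (2 * (m * Real.sqrt m)) := by
  set sa := Real.sqrt a
  set sb := Real.sqrt b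
  set sm := Real.sqrt m
  have hsm : 0 < sm := Real.sqrt_pos.mpr hm
  have hsa : sm ≤ sa := Real.sqrt_le_sqrt ha
  have hsb : sm ≤ sb := Real.sqrt_le_sqrt hb
  have hsa0 : 0 < sa := lt_of_lt_of_le hsm hsa
  have hsb0 : 0 < sb := lt_of_lt_of_le hsm hsb
  have ha2 : sa^2 = a := Real.sq_sqrt (le_trans hm.le ha)
  have hb2 : sb^2 = b := Real.sq_sqrt (le_trans hm.le hb)
  have hm2 : sm^2 = m := Real.sq_sqrt hm.le
  have key : sa⁻¹ - sb⁻¹ = (sb - sa) / (sa * sb) := by field_simp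
  rw [key, ← ha2, ← hb2, abs_div]
  have habs : |sa^2 - sb^2| = |sa - sb| * (sa + sb) := by
    rw [show sa^2 - sb^2 = (sa - sb) * (sa + sb) by ring, abs_mul,
      abs_of_pos (show (0:ℝ) < sa + sb from add_pos hsa0 hsb0)]
  rw [habs, abs_of_pos (mul_pos hsa0 hsb0)]
  rw [div_le_div_iff₀ (mul_pos hsa0 hsb0) (by positivity)]
  rw [abs_sub_comm sb sa]
  have h2 : 0 ≤ |sa - sb| := abs_nonneg _
  have hp : sm*sm ≤ sa*sb := mul_le_mul hsa hsb hsm.le hsa0.le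
  have hfac : 2*(m*sm) ≤ (sa+sb)*(sa*sb) := by
    calc 2*(m*sm) = (2*sm)*(sm*sm) := by rw [← hm2]; ring
    _ ≤ (sa+sb)*(sa*sb) := mul_le_mul (by linarith) hp (by positivity) (by linarith)
  calc |sa - sb| * (2*(m*sm)) ≤ |sa - sb| * ((sa + sb) * (sa * sb)) :=
        mul_le_mul_of_nonneg_left hfac h2
    _ = |sa - sb| * (sa + sb) * (sa * sb) := by ring

lemma rpow_neg_half_eq {x : ℝ} (hx : 0 ≤ x) : x ^ (-(1:ℝ)/2) = (Real.sqrt x)⁻¹ := by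
  rw [show (-(1:ℝ)/2) = -(1/2 : ℝ) by ring, Real.rpow_neg hx, Real.sqrt_eq_rpow]

/-- Bound on `H₁ = (D^{−1/2} − D̂^{−1/2}) W D^{−1/2}`:
`‖H₁‖₂ ≤ (u/(2l)) (1−δ)^{−3/2} δ`. -/
theorem perturbation_H1_bound {n : ℕ}
    (W What : Matrix (Fin n) (Fin n) ℝ)
    (δ l u : ℝ) (hδ0 : 0 < δ) (hδ1 : δ < 1) (hl : 0 < l) (hlu : l < u)
    (hW : ∀ i j, l ≤ W i j ∧ W i j ≤ u)
    (hdiff : ∀ i j, |W i j - What i j| ≤ δ * l)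
    (P Phat : Matrix (Fin n) (Fin n) ℝ)
    (hP : P = Matrix.diagonal fun i => (∑ j, W i j) ^ (-(1 : ℝ) / 2))
    (hPhat : Phat = Matrix.diagonal fun i => (∑ j, What i j) ^ (-(1 : ℝ) / 2)) :
    l2OpNorm ((P - Phat) * W * P) ≤ u / (2 * l) * (1 - δ) ^ (-(3 : ℝ) / 2) * δ := by
  have h1δ : (0:ℝ) < 1 - δ := by linarith
  rcases Nat.eq_zero_or_pos n with hn | hn
  · subst hn
    have hz : (P - Phat) * W * P = 0 := Subsingleton.elim _ _
    rw [l2OpNorm_eq_norm, hz, norm_zero]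
    exact (mul_pos (mul_pos (div_pos (by linarith) (by linarith))
      (Real.rpow_pos_of_pos h1δ _)) hδ0).le
  have hN : (0:ℝ) < (n:ℝ) := by exact_mod_cast hn
  set D : Fin n → ℝ := fun i => ∑ j, W i j with hD
  set Dhat : Fin n → ℝ := fun i => ∑ j, What i j with hDhat
  have hDl : ∀ i, (n:ℝ) * l ≤ D i := by
    intro i
    calc (n:ℝ) * l = ∑ _j : Fin n, l := by simp [mul_comm]
      _ ≤ D i := Finset.sum_le_sum fun j _ => (hW i j).1
  set m : ℝ := (n:ℝ) * ((1 - δ) * l) with hm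
  have hm0 : 0 < m := by rw [hm]; exact mul_pos hN (mul_pos h1δ hl)
  have hDhatm : ∀ i, m ≤ Dhat i := by
    intro i
    calc m = ∑ _j : Fin n, (1 - δ) * l := by rw [hm]; simp [mul_comm]
      _ ≤ Dhat i := by
          apply Finset.sum_le_sum
          intro j _
          have h1 := (hW i j).1
          have h2 := abs_le.mp (hdiff i j)
          nlinarith [h2.1, h2.2]
  have hDm : ∀ i, m ≤ D i := by
    intro i
    refine le_trans ?_ (hDl i)
    rw [hm]
    nlinarith
  have hdiffD : ∀ i, |D i - Dhat i| ≤ (n:ℝ) * (δ * l) := by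
    intro i
    calc |D i - Dhat i| = |∑ j, (W i j - What i j)| := by rw [Finset.sum_sub_distrib]
      _ ≤ ∑ j, |W i j - What i j| := Finset.abs_sum_le_sum_abs _ _
      _ ≤ ∑ _j : Fin n, δ * l := Finset.sum_le_sum fun j _ => hdiff i j
      _ = (n:ℝ) * (δ * l) := by simp [mul_comm]
  have hP' : P = Matrix.diagonal fun i => (Real.sqrt (D i))⁻¹ := by
    rw [hP]
    have hfun : (fun i => (∑ j, W i j) ^ (-(1:ℝ)/2)) = fun i => (Real.sqrt (D i))⁻¹ := by
      funext i
      exact rpow_neg_half_eq (le_trans (mul_pos hN hl).le (hDl i))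
    rw [hfun]
  have hPhat' : Phat = Matrix.diagonal fun i => (Real.sqrt (Dhat i))⁻¹ := by
    rw [hPhat]
    have hfun : (fun i => (∑ j, What i j) ^ (-(1:ℝ)/2)) = fun i => (Real.sqrt (Dhat i))⁻¹ := by
      funext i
      exact rpow_neg_half_eq (le_trans hm0.le (hDhatm i))
    rw [hfun]
  set c₁ : ℝ := ((n:ℝ) * (δ * l)) / (2 * (m * Real.sqrt m)) with hc₁
  have hdenom : (0:ℝ) < 2 * (m * Real.sqrt m) :=
    mul_pos two_pos (mul_pos hm0 (Real.sqrt_pos.mpr hm0))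
  have hc₁0 : 0 ≤ c₁ := by
    rw [hc₁]; positivity
  have hnorm1 : l2OpNorm (P - Phat) ≤ c₁ := by
    rw [hP', hPhat', Matrix.diagonal_sub]
    apply opNorm_diagonal_le _ hc₁0
    intro i
    calc |(Real.sqrt (D i))⁻¹ - (Real.sqrt (Dhat i))⁻¹|
        ≤ |D i - Dhat i| / (2 * (m * Real.sqrt m)) := inv_sqrt_diff_le hm0 (hDm i) (hDhatm i)
      _ ≤ c₁ := by
          rw [hc₁]
          exact div_le_div_of_nonneg_right (hdiffD i) hdenom.le
  have hnorm2 : l2OpNorm W ≤ (n:ℝ) * u := by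
    apply opNorm_le_of_entries _ (by linarith : (0:ℝ) ≤ u)
    intro i j
    exact abs_le.mpr ⟨by linarith [(hW i j).1], (hW i j).2⟩
  have hnorm3 : l2OpNorm P ≤ (Real.sqrt ((n:ℝ) * l))⁻¹ := by
    rw [hP']
    apply opNorm_diagonal_le _ (inv_nonneg.mpr (Real.sqrt_nonneg _))
    intro i
    have hDi : (0:ℝ) < D i := lt_of_lt_of_le (mul_pos hN hl) (hDl i)
    rw [abs_of_pos (inv_pos.mpr (Real.sqrt_pos.mpr hDi))]
    apply inv_anti₀ (Real.sqrt_pos.mpr (mul_pos hN hl))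
    exact Real.sqrt_le_sqrt (hDl i)
  have hmul : l2OpNorm ((P - Phat) * W * P) ≤ c₁ * ((n:ℝ) * u) * (Real.sqrt ((n:ℝ) * l))⁻¹ := by
    simp only [l2OpNorm_eq_norm] at *
    calc ‖(P - Phat) * W * P‖ ≤ ‖(P - Phat) * W‖ * ‖P‖ := Matrix.l2_opNorm_mul _ _
      _ ≤ (‖P - Phat‖ * ‖W‖) * ‖P‖ :=
          mul_le_mul_of_nonneg_right (Matrix.l2_opNorm_mul _ _) (norm_nonneg _)
      _ ≤ (c₁ * ((n:ℝ) * u)) * (Real.sqrt ((n:ℝ) * l))⁻¹ :=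
          mul_le_mul (mul_le_mul hnorm1 hnorm2 (norm_nonneg _) hc₁0) hnorm3
            (norm_nonneg _) (mul_nonneg hc₁0 (mul_nonneg (Nat.cast_nonneg n) (by linarith)))
  refine le_trans hmul (le_of_eq ?_)
  -- arithmetic
  have hrpow : (1 - δ) ^ (-(3:ℝ)/2) = ((1 - δ) * Real.sqrt (1 - δ))⁻¹ := by
    rw [show (-(3:ℝ)/2) = -((1:ℝ) + 1/2) by ring, Real.rpow_neg h1δ.le,
      Real.rpow_add h1δ, Real.rpow_one, Real.sqrt_eq_rpow]
  rw [hrpow, hc₁, hm]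
  have hsqm : Real.sqrt ((n:ℝ) * ((1 - δ) * l)) = Real.sqrt n * (Real.sqrt (1 - δ) * Real.sqrt l) := by
    rw [Real.sqrt_mul hN.le, Real.sqrt_mul h1δ.le]
  have hsqnl : Real.sqrt ((n:ℝ) * l) = Real.sqrt n * Real.sqrt l := Real.sqrt_mul hN.le _
  rw [hsqm, hsqnl]
  have e1 : (n:ℝ) = Real.sqrt n ^ 2 := (Real.sq_sqrt hN.le).symm
  have e2 : (1 - δ) = Real.sqrt (1 - δ) ^ 2 := (Real.sq_sqrt h1δ.le).symm
  have e3 : l = Real.sqrt l ^ 2 := (Real.sq_sqrt hl.le).symm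
  have p1 : (0:ℝ) < Real.sqrt n := Real.sqrt_pos.mpr hN
  have p2 : (0:ℝ) < Real.sqrt (1 - δ) := Real.sqrt_pos.mpr h1δ
  have p3 : (0:ℝ) < Real.sqrt l := Real.sqrt_pos.mpr hl
  field_simp
  linear_combination (u*l) * e1
    + (u*Real.sqrt (n:ℝ)^2) * e3
end
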